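/- arXiv:1311.6036 — 2 statements merged into one kernel-verified Lean document; each statement's English description precedes it below -/
import Mathlib

section
/- Let H be a Jacobi matrix as in the context and let u, v be normalized eigenvectors of H with respective eigenvalues E_u and E_v, extended by u(0) = v(0) = 0. Define the Wronskian W(n) := a(n)·(u(n)v(n−1) − u(n−1)v(n)). Then for every n ∈ {1,…,L} one has |W(n)| ≤ |E_u − E_v|, and consequently |u(n)v(n−1) − u(n−1)v(n)| ≤ M·|E_u − E_v|. -/
/-!
Green's formula for the three-term recurrence: for eigenvectors `u`, `v` of the Jacobi matrix,
`W(n+1) - W(n) = (E_u - E_v) u(n) v(n)`, and `W(1) = 0` by the boundary condition `u(0) = v(0) = 0`.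
Hence `W(n) = (E_u - E_v) ∑_{k<n} u(k) v(k)`, and Cauchy–Schwarz with the normalization bounds the
partial sum by `1`. The bound on the bare determinant follows from `|a(n)| ≥ 1/M`.
-/

/-- Jacobi matrix on `ℓ²({1,…,L})` with Dirichlet boundary conditions:
`(Hu)(n) = a(n+1)u(n+1) + a(n)u(n-1) + V(n)u(n)`, site `n = i.val + 1`. -/
noncomputable def jacobiMatrix (L : ℕ) (a V : ℕ → ℝ) : Matrix (Fin L) (Fin L) ℝ :=
  fun i j =>
    if i.val + 1 = j.val then a (j.val + 1)
    else if j.val + 1 = i.val then a (i.val + 1)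
    else if i = j then V (i.val + 1) else 0

/-- Extension of `u : Fin L → ℝ` to `ℕ` by `0`; site `n ∈ {1,…,L}` is `u ⟨n-1⟩`. -/
def extV (L : ℕ) (u : Fin L → ℝ) (n : ℕ) : ℝ :=
  if h : 1 ≤ n ∧ n ≤ L then u ⟨n - 1, by omega⟩ else 0

lemma extV_eq_sum (L : ℕ) (u : Fin L → ℝ) (n : ℕ) :
    extV L u n = ∑ j : Fin L, if j.val + 1 = n then u j else 0 := by
  unfold extV
  split_ifs with h
  · rw [Finset.sum_eq_single ⟨n - 1, by omega⟩]
    · simp only [if_pos (show n - 1 + 1 = n by omega)]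
    · intro j _ hj
      exact if_neg fun hjn => hj (Fin.ext (show (j : ℕ) = n - 1 by omega))
    · simp
  · exact (Finset.sum_eq_zero fun j _ => if_neg (by omega)).symm

lemma jacobiMatrix_mulVec_apply (L : ℕ) (a V : ℕ → ℝ) (u : Fin L → ℝ) (i : Fin L) :
    (jacobiMatrix L a V).mulVec u i =
      a (i + 2) * extV L u (i + 2) + a (i + 1) * extV L u i + V (i + 1) * extV L u (i + 1) := by
  simp only [Matrix.mulVec, dotProduct, extV_eq_sum, Finset.mul_sum, ← Finset.sum_add_distrib]
  refine Finset.sum_congr rfl fun j _ => ?_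
  simp only [jacobiMatrix, Fin.ext_iff]
  split_ifs <;> grind

lemma extV_val_add_one (L : ℕ) (u : Fin L → ℝ) (i : Fin L) : extV L u (i + 1) = u i := by
  simp [extV]

lemma extV_zero (L : ℕ) (u : Fin L → ℝ) : extV L u 0 = 0 := by
  simp [extV]

lemma extV_recurrence_of_mulVec_eq_smul (L : ℕ) (a V : ℕ → ℝ) (u : Fin L → ℝ) (E : ℝ)
    (hu : (jacobiMatrix L a V).mulVec u = E • u) (i : Fin L) :
    a (i + 2) * extV L u (i + 2) + a (i + 1) * extV L u i + V (i + 1) * extV L u (i + 1)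
      = E * extV L u (i + 1) := by
  rw [← jacobiMatrix_mulVec_apply, hu, extV_val_add_one, Pi.smul_apply, smul_eq_mul]

def wronskian (L : ℕ) (a : ℕ → ℝ) (u v : Fin L → ℝ) (n : ℕ) : ℝ :=
  a n * (extV L u n * extV L v (n - 1) - extV L u (n - 1) * extV L v n)

section Eigenvectors

variable {L : ℕ} {a V : ℕ → ℝ} {u v : Fin L → ℝ} {Eu Ev : ℝ}

lemma wronskian_succ (hu : (jacobiMatrix L a V).mulVec u = Eu • u)
    (hv : (jacobiMatrix L a V).mulVec v = Ev • v) (i : Fin L) :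
    wronskian L a u v (i + 2) =
      wronskian L a u v (i + 1) + (Eu - Ev) * extV L u (i + 1) * extV L v (i + 1) := by
  have hru := extV_recurrence_of_mulVec_eq_smul L a V u Eu hu i
  have hrv := extV_recurrence_of_mulVec_eq_smul L a V v Ev hv i
  simp only [wronskian, Nat.add_sub_cancel, show (i : ℕ) + 2 - 1 = i + 1 by omega]
  linear_combination extV L v (i + 1) * hru - extV L u (i + 1) * hrv

lemma wronskian_eq_mul_sum (hu : (jacobiMatrix L a V).mulVec u = Eu • u)
    (hv : (jacobiMatrix L a V).mulVec v = Ev • v) {n : ℕ} (hn : n ≤ L) :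
    wronskian L a u v (n + 1) =
      (Eu - Ev) * ∑ k ∈ Finset.range n, extV L u (k + 1) * extV L v (k + 1) := by
  induction n with
  | zero => simp [wronskian, extV_zero]
  | succ m ih =>
    rw [wronskian_succ hu hv ⟨m, hn⟩, ih (by omega), Finset.sum_range_succ]
    ring

end Eigenvectors

lemma sum_range_extV_sq_le (L : ℕ) (u : Fin L → ℝ) {n : ℕ} (hn : n ≤ L) :
    ∑ k ∈ Finset.range n, extV L u (k + 1) ^ 2 ≤ ∑ i, u i ^ 2 := by
  calc ∑ k ∈ Finset.range n, extV L u (k + 1) ^ 2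
      ≤ ∑ k ∈ Finset.range L, extV L u (k + 1) ^ 2 :=
        Finset.sum_le_sum_of_subset_of_nonneg (Finset.range_subset_range.mpr hn)
          fun _ _ _ => sq_nonneg _
    _ = ∑ i, u i ^ 2 := by
        simp only [← Fin.sum_univ_eq_sum_range (fun k => extV L u (k + 1) ^ 2), extV_val_add_one]

lemma sq_sum_range_extV_mul_le (L : ℕ) (u v : Fin L → ℝ) {n : ℕ} (hn : n ≤ L) :
    (∑ k ∈ Finset.range n, extV L u (k + 1) * extV L v (k + 1)) ^ 2 ≤
      (∑ i, u i ^ 2) * ∑ i, v i ^ 2 :=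
  (Finset.sum_mul_sq_le_sq_mul_sq _ _ _).trans <|
    mul_le_mul (sum_range_extV_sq_le L u hn) (sum_range_extV_sq_le L v hn)
      (Finset.sum_nonneg fun _ _ => sq_nonneg _) (Finset.sum_nonneg fun _ _ => sq_nonneg _)

theorem stmt3_general (M : ℝ) (hM : 1 < M)
    (L : ℕ) (a V : ℕ → ℝ)
    (ha : ∀ n, 1 ≤ n → n ≤ L + 1 → 1 / M ≤ |a n| ∧ |a n| ≤ M)
    (u v : Fin L → ℝ) (Eu Ev : ℝ)
    (hu : (jacobiMatrix L a V).mulVec u = Eu • u)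
    (hv : (jacobiMatrix L a V).mulVec v = Ev • v)
    (hnu : (∑ i, u i ^ 2) = 1) (hnv : (∑ i, v i ^ 2) = 1) :
    ∀ n, 1 ≤ n → n ≤ L →
      |a n * (extV L u n * extV L v (n - 1) - extV L u (n - 1) * extV L v n)|
        ≤ |Eu - Ev| ∧
      |extV L u n * extV L v (n - 1) - extV L u (n - 1) * extV L v n|
        ≤ M * |Eu - Ev| := by
  intro n hn₁ hnL
  have hW : |wronskian L a u v n| ≤ |Eu - Ev| := by
    obtain ⟨m, rfl⟩ : ∃ m, n = m + 1 := ⟨n - 1, by omega⟩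
    have hsum : |∑ k ∈ Finset.range m, extV L u (k + 1) * extV L v (k + 1)| ≤ 1 := by
      rw [← sq_le_one_iff_abs_le_one]
      simpa only [hnu, hnv, mul_one] using sq_sum_range_extV_mul_le L u v (n := m) (by omega)
    rw [wronskian_eq_mul_sum hu hv (by omega), abs_mul]
    exact mul_le_of_le_one_right (abs_nonneg _) hsum
  refine ⟨hW, ?_⟩
  set d := extV L u n * extV L v (n - 1) - extV L u (n - 1) * extV L v n
  have hM₀ : 0 < M := by linarith
  calc |d| = M * (1 / M * |d|) := by field_simp
    _ ≤ M * (|a n| * |d|) := by gcongr; exact (ha n hn₁ (by omega)).1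
    _ = M * |wronskian L a u v n| := by rw [wronskian, abs_mul]
    _ ≤ M * |Eu - Ev| := by gcongr

/-- bound on the Wronskian
`W(n) = a(n)·(u(n)v(n-1) - u(n-1)v(n))` of two normalized eigenvectors. -/
theorem stmt3 (M K : ℝ) (hM : 1 < M) (hK : 0 < K)
    (L : ℕ) (a V : ℕ → ℝ)
    (ha : ∀ n, 1 ≤ n → n ≤ L + 1 → 1 / M ≤ |a n| ∧ |a n| ≤ M)
    (hV : ∀ n, 1 ≤ n → n ≤ L → |V n| ≤ K)
    (u v : Fin L → ℝ) (Eu Ev : ℝ)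
    (hu : (jacobiMatrix L a V).mulVec u = Eu • u)
    (hv : (jacobiMatrix L a V).mulVec v = Ev • v)
    (hnu : (∑ i, u i ^ 2) = 1) (hnv : (∑ i, v i ^ 2) = 1) :
    ∀ n, 1 ≤ n → n ≤ L →
      |a n * (extV L u n * extV L v (n - 1) - extV L u (n - 1) * extV L v n)|
        ≤ |Eu - Ev| ∧
      |extV L u n * extV L v (n - 1) - extV L u (n - 1) * extV L v n|
        ≤ M * |Eu - Ev| :=
  stmt3_general M hM L a V ha u v Eu Ev hu hv hnu hnv
end

section
/- There exists ε₀ > 0 (depending only on M and K) such that the following holds for all real E and ε with 0 ≤ E < ε ≤ ε₀. Let u be a not identically zero solution of a(n+1)·u(n+1) + a(n)·u(n−1) = W(n)·u(n), and let v be a not identically zero solution of a(n+1)·v(n+1) + a(n)·v(n−1) = (W(n) + E)·v(n), with a and W as in the context. If at some n ∈ {1,…,L−1} one has |u(n)/r_u(n) + v(n)/r_v(n)| ≤ ε and |u(n−1)/r_u(n) + v(n−1)/r_v(n)| ≤ ε, then |u(n+1)/r_u(n+1) + v(n+1)/r_v(n+1)| ≤ ε/ε₀ and |u(n)/r_u(n+1)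 + v(n)/r_v(n+1)| ≤ ε/ε₀. (In Prüfer variables: if the angle difference δφ(n) = φ_u(n) − φ_v(n) lies in [π − ε, π], then δφ(n+1) lies in [π − ε/ε₀, π].) -/
/-! Write `Z_u(n) = (u n, u (n - 1))` for the Prüfer vector, so that `r_u(n) = ‖Z_u(n)‖` and the
hypothesis says that the unit vectors `Z_u(n)/r_u(n)` and `Z_v(n)/r_v(n)` are `ε`-close to
antipodal. Rescale `u` and `v` so that these are their Prüfer vectors at `n`. Adding the two
recurrences expresses `a(n+1) (u(n+1) + v(n+1))` through `u n + v n`, `u(n-1) + v(n-1)` and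
`E v n`, all `O(ε)`; as `|a(n+1)| ≥ 1/M`, the rescaled `Z_u(n+1)` and `Z_v(n+1)` are `O(ε)`-close
to antipodal. Normalizing preserves this up to the factor `2/‖x‖`, since
`‖x/‖x‖ + y/‖y‖‖ ≤ 2‖x + y‖/‖x‖`, and the recurrence also gives
`r_u(n) ≤ (1 + M(M + K)) r_u(n+1)`, which bounds that factor. If `Z_u(n) = 0`, the hypothesis
forces `Z_v(n) = 0`, and both solutions then vanish at `n + 1`. -/

/-- Prüfer radius `r_u(n) = √(u(n)² + u(n-1)²)` of a sequence `u : ℕ → ℝ`. -/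
noncomputable def pruf (u : ℕ → ℝ) (n : ℕ) : ℝ :=
  Real.sqrt (u n ^ 2 + u (n - 1) ^ 2)

open NormedSpace

section NormalizeNearAntipodal

variable {V : Type*} [NormedAddCommGroup V] [NormedSpace ℝ V]

lemma norm_normalize_add_normalize_le {x : V} (hx : x ≠ 0) (y : V) :
    ‖NormedSpace.normalize x + NormedSpace.normalize y‖ ≤ 2 * ‖x + y‖ / ‖x‖ := by
  have hx' : ‖x‖ ≠ 0 := norm_ne_zero_iff.mpr hx
  have hdecomp : NormedSpace.normalize x + NormedSpace.normalize y =
      ‖x‖⁻¹ • ((x + y) + (‖x‖ - ‖y‖) • NormedSpace.normalize y) := by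
    rcases eq_or_ne y 0 with rfl | hy
    · simp [NormedSpace.normalize]
    · have hy' : ‖y‖ ≠ 0 := norm_ne_zero_iff.mpr hy
      simp only [NormedSpace.normalize]
      match_scalars <;> field_simp
      ring
  have hnormalize_le : ‖NormedSpace.normalize y‖ ≤ 1 := by
    rcases eq_or_ne y 0 with rfl | hy
    · simp
    · exact (norm_normalize hy).le
  have hgap : |‖x‖ - ‖y‖| ≤ ‖x + y‖ := by
    simpa [sub_neg_eq_add] using abs_norm_sub_norm_le x (-y)
  rw [hdecomp, norm_smul, norm_inv, norm_norm, inv_mul_eq_div]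
  gcongr
  calc ‖x + y + (‖x‖ - ‖y‖) • NormedSpace.normalize y‖
      ≤ ‖x + y‖ + |‖x‖ - ‖y‖| * ‖NormedSpace.normalize y‖ := by
        grw [norm_add_le, norm_smul, Real.norm_eq_abs]
    _ ≤ ‖x + y‖ + ‖x + y‖ * 1 := by gcongr
    _ = 2 * ‖x + y‖ := by ring

lemma eq_zero_iff_of_norm_normalize_add_lt_one {x y : V}
    (h : ‖NormedSpace.normalize x + NormedSpace.normalize y‖ < 1) : x = 0 ↔ y = 0 := by
  constructor <;> rintro rfl <;> by_contra hne
  · simp [norm_normalize hne] at h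
  · simp [norm_normalize hne] at h

end NormalizeNearAntipodal

section RecurrenceStep

variable {M K w E ε a₀ a₁ x₀ x₁ x₂ y₀ y₁ y₂ : ℝ}

lemma abs_le_mul_abs_mul (hM : 0 < M) (ha : 1 / M ≤ |a₁|) (x : ℝ) : |x| ≤ M * |a₁ * x| := by
  calc |x| = M * (1 / M * |x|) := by field_simp
    _ ≤ M * |a₁ * x| := by rw [abs_mul]; gcongr

lemma abs_le_of_recurrence (hM : 0 < M) (ha₀ : 1 / M ≤ |a₀|) (ha₁ : |a₁| ≤ M) (hw : |w| ≤ K)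
    (hx : a₁ * x₂ + a₀ * x₀ = w * x₁) : |x₀| ≤ M * (M * |x₂| + K * |x₁|) := by
  calc |x₀| ≤ M * |a₀ * x₀| := abs_le_mul_abs_mul hM ha₀ x₀
    _ = M * |w * x₁ - a₁ * x₂| := by rw [← hx, add_sub_cancel_left]
    _ ≤ M * (M * |x₂| + K * |x₁|) := by
      grw [abs_sub, abs_mul, abs_mul, hw, ha₁]
      linarith

lemma abs_add_le_of_recurrence (hM : 0 < M) (ha₀ : |a₀| ≤ M) (ha₁ : 1 / M ≤ |a₁|)
    (hw : |w| ≤ K) (hE : |E| ≤ ε) (hy₁ : |y₁| ≤ 1)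
    (hx : a₁ * x₂ + a₀ * x₀ = w * x₁) (hy : a₁ * y₂ + a₀ * y₀ = (w + E) * y₁)
    (h₀ : |x₀ + y₀| ≤ ε) (h₁ : |x₁ + y₁| ≤ ε) :
    |x₂ + y₂| ≤ M * (K + 1 + M) * ε := by
  have hsum : a₁ * (x₂ + y₂) = w * (x₁ + y₁) + E * y₁ - a₀ * (x₀ + y₀) := by
    linear_combination hx + hy
  calc |x₂ + y₂| ≤ M * |a₁ * (x₂ + y₂)| := abs_le_mul_abs_mul hM ha₁ _
    _ ≤ M * (|w| * |x₁ + y₁| + |E| * |y₁| + |a₀| * |x₀ + y₀|) := by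
      rw [hsum, ← abs_mul, ← abs_mul, ← abs_mul]
      gcongr
      exact (abs_sub _ _).trans (by gcongr; exact abs_add_le _ _)
    _ ≤ M * (K * ε + ε * 1 + M * ε) := by
      gcongr
      exacts [(abs_nonneg w).trans hw, (abs_nonneg E).trans hE]
    _ = M * (K + 1 + M) * ε := by ring

end RecurrenceStep

/-- The Prüfer vector `(u n, u (n - 1))`, encoded in `ℂ` so that its norm is `pruf u n`. -/
def prufVec (u : ℕ → ℝ) (n : ℕ) : ℂ := ⟨u n, u (n - 1)⟩

section PrufVec

variable {M K w E ε : ℝ} {a u v : ℕ → ℝ} {n : ℕ}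

@[simp] lemma prufVec_re : (prufVec u n).re = u n := rfl

@[simp] lemma prufVec_im : (prufVec u n).im = u (n - 1) := rfl

lemma norm_prufVec : ‖prufVec u n‖ = pruf u n := Complex.norm_eq_sqrt_sq_add_sq _

lemma re_normalize_prufVec : (NormedSpace.normalize (prufVec u n)).re = u n / pruf u n := by
  simp [NormedSpace.normalize, norm_prufVec, inv_mul_eq_div]

lemma im_normalize_prufVec :
    (NormedSpace.normalize (prufVec u n)).im = u (n - 1) / pruf u n := by
  simp [NormedSpace.normalize, norm_prufVec, inv_mul_eq_div]

lemma prufVec_succ_eq_zero (ha : a (n + 1) ≠ 0)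
    (h : a (n + 1) * u (n + 1) + a n * u (n - 1) = w * u n) (h0 : prufVec u n = 0) :
    prufVec u (n + 1) = 0 := by
  obtain ⟨hn, hn'⟩ : u n = 0 ∧ u (n - 1) = 0 := Complex.ext_iff.mp h0
  rw [hn, hn', mul_zero, mul_zero, add_zero, mul_eq_zero] at h
  exact Complex.ext (h.resolve_left ha) (by simpa using hn)

lemma norm_prufVec_le_mul_norm_prufVec_succ (hM : 0 < M) (ha₀ : 1 / M ≤ |a n|)
    (ha₁ : |a (n + 1)| ≤ M) (hw : |w| ≤ K)
    (h : a (n + 1) * u (n + 1) + a n * u (n - 1) = w * u n) :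
    ‖prufVec u n‖ ≤ (1 + M * (M + K)) * ‖prufVec u (n + 1)‖ := by
  have hK : 0 ≤ K := (abs_nonneg w).trans hw
  have hprev := abs_le_of_recurrence hM ha₀ ha₁ hw h
  have hnext : |u (n + 1)| ≤ ‖prufVec u (n + 1)‖ := by
    simpa using Complex.abs_re_le_norm (prufVec u (n + 1))
  have hcur : |u n| ≤ ‖prufVec u (n + 1)‖ := by
    simpa using Complex.abs_im_le_norm (prufVec u (n + 1))
  calc ‖prufVec u n‖ ≤ |u n| + |u (n - 1)| := Complex.norm_le_abs_re_add_abs_im _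
    _ ≤ |u n| + M * (M * |u (n + 1)| + K * |u n|) := by grw [hprev]
    _ ≤ _ := by
      grw [hnext, hcur]
      linarith

lemma norm_normalize_prufVec_succ_add_le_of_ne_zero (hM : 0 < M)
    (ha₀ : 1 / M ≤ |a n| ∧ |a n| ≤ M) (ha₁ : 1 / M ≤ |a (n + 1)| ∧ |a (n + 1)| ≤ M)
    (hw : |w| ≤ K) (hE : |E| ≤ ε)
    (hu : a (n + 1) * u (n + 1) + a n * u (n - 1) = w * u n)
    (hv : a (n + 1) * v (n + 1) + a n * v (n - 1) = (w + E) * v n)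
    (hu0 : prufVec u n ≠ 0) (hv0 : prufVec v n ≠ 0)
    (hcos : |u (n - 1) / pruf u n + v (n - 1) / pruf v n| ≤ ε)
    (hsin : |u n / pruf u n + v n / pruf v n| ≤ ε) :
    ‖NormedSpace.normalize (prufVec u (n + 1)) + NormedSpace.normalize (prufVec v (n + 1))‖ ≤
      2 * (1 + M * (M + K + 1)) ^ 2 * ε := by
  simp only [← norm_prufVec] at hcos hsin
  set r := ‖prufVec u n‖
  set s := ‖prufVec v n‖
  have hr : 0 < r := norm_pos_iff.mpr hu0
  have hs : 0 < s := norm_pos_iff.mpr hv0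
  set C := 1 + M * (M + K + 1)
  have hε : 0 ≤ ε := (abs_nonneg E).trans hE
  -- the solutions rescaled to unit Prüfer vectors at `n`, seen at `n + 1`
  set x := r⁻¹ • prufVec u (n + 1)
  set y := s⁻¹ • prufVec v (n + 1)
  have hvn : |v n / s| ≤ 1 := by
    rw [abs_div, abs_of_pos hs]
    exact div_le_one_of_le₀ (by simpa using Complex.abs_re_le_norm (prufVec v n)) hs.le
  have hnext : |u (n + 1) / r + v (n + 1) / s| ≤ M * (K + 1 + M) * ε :=
    abs_add_le_of_recurrence hM ha₀.2 ha₁.1 hw hE hvn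
      (by linear_combination hu / r) (by linear_combination hv / s) hcos hsin
  have hxy : ‖x + y‖ ≤ C * ε := by
    calc ‖x + y‖ ≤ |(x + y).re| + |(x + y).im| := Complex.norm_le_abs_re_add_abs_im _
      _ = |u (n + 1) / r + v (n + 1) / s| + |u n / r + v n / s| := by
        simp [x, y, inv_mul_eq_div]
      _ ≤ M * (K + 1 + M) * ε + ε := add_le_add hnext hsin
      _ = C * ε := by ring
  have hx : 1 ≤ C * ‖x‖ := by
    have hgrowth := norm_prufVec_le_mul_norm_prufVec_succ hM ha₀.1 ha₁.2 hw hu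
    rw [norm_smul, norm_inv, norm_norm, ← div_eq_inv_mul, mul_div_assoc', le_div_iff₀ hr,
      one_mul]
    refine hgrowth.trans (mul_le_mul_of_nonneg_right ?_ (norm_nonneg _))
    linarith [mul_le_mul_of_nonneg_left (le_add_of_nonneg_right zero_le_one : M + K ≤ M + K + 1)
      hM.le]
  have hx0 : x ≠ 0 := by
    rintro h
    norm_num [h] at hx
  calc ‖NormedSpace.normalize (prufVec u (n + 1)) + NormedSpace.normalize (prufVec v (n + 1))‖
      = ‖NormedSpace.normalize x + NormedSpace.normalize y‖ := by
        rw [normalize_smul_of_pos (inv_pos.mpr hr),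
          normalize_smul_of_pos (inv_pos.mpr hs)]
    _ ≤ 2 * ‖x + y‖ / ‖x‖ := norm_normalize_add_normalize_le hx0 y
    _ ≤ 2 * C ^ 2 * ε := by
      have hK : 0 ≤ K := (abs_nonneg w).trans hw
      have hC : 0 ≤ C := by positivity
      rw [div_le_iff₀ (norm_pos_iff.mpr hx0)]
      calc 2 * ‖x + y‖ ≤ 2 * (C * ε) * 1 := by linarith
        _ ≤ 2 * (C * ε) * (C * ‖x‖) := by gcongr
        _ = 2 * C ^ 2 * ε * ‖x‖ := by ring

lemma norm_normalize_prufVec_succ_add_le (hM : 0 < M)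
    (ha₀ : 1 / M ≤ |a n| ∧ |a n| ≤ M) (ha₁ : 1 / M ≤ |a (n + 1)| ∧ |a (n + 1)| ≤ M)
    (hw : |w| ≤ K) (hE : |E| ≤ ε) (hε : 2 * ε < 1)
    (hu : a (n + 1) * u (n + 1) + a n * u (n - 1) = w * u n)
    (hv : a (n + 1) * v (n + 1) + a n * v (n - 1) = (w + E) * v n)
    (hcos : |u (n - 1) / pruf u n + v (n - 1) / pruf v n| ≤ ε)
    (hsin : |u n / pruf u n + v n / pruf v n| ≤ ε) :
    ‖NormedSpace.normalize (prufVec u (n + 1)) + NormedSpace.normalize (prufVec v (n + 1))‖ ≤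
      2 * (1 + M * (M + K + 1)) ^ 2 * ε := by
  have hsmall :
      ‖NormedSpace.normalize (prufVec u n) + NormedSpace.normalize (prufVec v n)‖ < 1 := by
    grw [Complex.norm_le_abs_re_add_abs_im, Complex.add_re, Complex.add_im,
      re_normalize_prufVec, re_normalize_prufVec, im_normalize_prufVec, im_normalize_prufVec]
    linarith
  have hzero_iff := eq_zero_iff_of_norm_normalize_add_lt_one hsmall
  rcases eq_or_ne (prufVec u n) 0 with hu0 | hu0
  · have ha : a (n + 1) ≠ 0 := abs_pos.mp ((one_div_pos.mpr hM).trans_le ha₁.1)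
    rw [prufVec_succ_eq_zero ha hu hu0, prufVec_succ_eq_zero ha hv (hzero_iff.mp hu0)]
    simp only [normalize_zero_eq_zero, add_zero, norm_zero]
    exact mul_nonneg (by positivity) ((abs_nonneg E).trans hE)
  · exact norm_normalize_prufVec_succ_add_le_of_ne_zero hM ha₀ ha₁ hw hE hu hv hu0
      (mt hzero_iff.mpr hu0) hcos hsin

end PrufVec

/-- Lemma `oppo`.  If the Prüfer angle difference of two solutions (for
potentials `W` and `W + E`) is small at `n` — expressed through sines and cosines — then
it stays controlled at `n+1` (version with angle difference near `π`). -/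
theorem stmt19 (M K : ℝ) (hM : 1 < M) (hK : 0 < K) :
    ∃ ε₀ : ℝ, 0 < ε₀ ∧
      ∀ E ε : ℝ, 0 ≤ E → E < ε → ε ≤ ε₀ →
      ∀ (L : ℕ) (a W u v : ℕ → ℝ),
        (∀ n, 1 / M ≤ |a n| ∧ |a n| ≤ M) → (∀ n, |W n| ≤ K) →
        (∀ n, 1 ≤ n → n ≤ L - 1 →
          a (n + 1) * u (n + 1) + a n * u (n - 1) = W n * u n) →
        (∀ n, 1 ≤ n → n ≤ L - 1 →
          a (n + 1) * v (n + 1) + a n * v (n - 1) = (W n + E) * v n) →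
        (∃ n, n ≤ L ∧ u n ≠ 0) → (∃ n, n ≤ L ∧ v n ≠ 0) →
        ∀ n, 1 ≤ n → n ≤ L - 1 →
          |u n / pruf u n + v n / pruf v n| ≤ ε →
          |u (n - 1) / pruf u n + v (n - 1) / pruf v n| ≤ ε →
          |u (n + 1) / pruf u (n + 1) + v (n + 1) / pruf v (n + 1)| ≤ ε / ε₀ ∧
          |u n / pruf u (n + 1) + v n / pruf v (n + 1)| ≤ ε / ε₀ := by
  have hM0 : 0 < M := by linarith
  set C := 1 + M * (M + K + 1)
  have hC : 1 < C := by nlinarith [mul_pos hM0 (by linarith : 0 < M + K + 1)]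
  refine ⟨1 / (2 * C ^ 2), by positivity, ?_⟩
  intro E ε hE hEε hεε₀ L a W u v ha hW hu hv _ _ n hn hnL hsin hcos
  have h2ε : 2 * ε < 1 := by
    have hεC : ε * (2 * C ^ 2) ≤ 1 := by rwa [le_div_iff₀ (by positivity)] at hεε₀
    nlinarith [hE.trans_lt hEε]
  have h := norm_normalize_prufVec_succ_add_le hM0 (ha n) (ha (n + 1)) (hW n)
    (abs_le.mpr ⟨by linarith, hEε.le⟩) h2ε (hu n hn hnL) (hv n hn hnL) hcos hsin
  rw [one_div, div_inv_eq_mul, mul_comm]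
  exact ⟨by simpa [re_normalize_prufVec] using (Complex.abs_re_le_norm _).trans h,
    by simpa [im_normalize_prufVec] using (Complex.abs_im_le_norm _).trans h⟩
end
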